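/- Suppose k = (k₀, 0, 0, …) with k₀ ≠ 0, i.e. α_k(y) = k₀ + y with k₀ ≠ 0. Then A₁ᵏ is isomorphic to A₁ˡ if and only if l = (l₀, 0, 0, …) with l₀ ≠ 0, i.e. α_l(y) = l₀ + y with l₀ ≠ 0. -/

import Mathlib

/-!
Since `α_k` is an automorphism, an isomorphism `f` forces `α_l` to be surjective. In the
representation of `A₁` on `K[t]` by `x ↦ d/dt`, `y ↦ t · _`, the element `α_l x = x` acts as
`d/dt` and `α_l y` as multiplication by `q = t + ∑ lᵢ t^{ip}`. In characteristic `p` we have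
`q' = 1`, so the subalgebra `K[q] ⊆ K[t]` is stable under all of `α_l(A₁)`; as `y` lies in the
image of `α_l`, `t = y · 1 ∈ K[q]`, hence `deg q = 1`, i.e. `l_{ip} = 0` for `i ≥ 1`. If moreover
`l₀ = 0` then `α_l = id`, forcing `α_k = id`, contradicting `k₀ ≠ 0`. Conversely, the rescaling
`x ↦ c x`, `y ↦ c⁻¹ y` with `c = l₀ / k₀` conjugates `y ↦ k₀ + y` into `y ↦ l₀ + y`.
-/

noncomputable section

/-- The defining relation of the first Weyl algebra: `x * y = y * x + 1`. -/
inductive WeylRel (K : Type*) [Field K] :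
    FreeAlgebra K (Fin 2) → FreeAlgebra K (Fin 2) → Prop
  | comm : WeylRel K (FreeAlgebra.ι K 0 * FreeAlgebra.ι K 1)
      (FreeAlgebra.ι K 1 * FreeAlgebra.ι K 0 + 1)

/-- The first Weyl algebra `A₁` over `K`: the free unital associative `K`-algebra on two
generators `x, y` modulo the relation `x·y − y·x = 1`. -/
abbrev Weyl (K : Type*) [Field K] := RingQuot (WeylRel K)

/-- The generator `x` of the first Weyl algebra. -/
def Wx (K : Type*) [Field K] : Weyl K :=
  RingQuot.mkAlgHom K (WeylRel K) (FreeAlgebra.ι K 0)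

/-- The generator `y` of the first Weyl algebra. -/
def Wy (K : Type*) [Field K] : Weyl K :=
  RingQuot.mkAlgHom K (WeylRel K) (FreeAlgebra.ι K 1)

def Submodule.stabilizerSubalgebra {R M : Type*} [CommSemiring R] [AddCommMonoid M] [Module R M]
    (V : Submodule R M) : Subalgebra R (Module.End R M) where
  carrier := {T | Set.MapsTo T V V}
  mul_mem' hS hT := hS.comp hT
  add_mem' hS hT _ hv := V.add_mem (hS hv) (hT hv)
  algebraMap_mem' r _ hv := V.smul_mem r hv

open Polynomial

namespace Weyl

variable {K : Type*} [Field K]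

theorem Wx_mul_Wy : Wx K * Wy K = Wy K * Wx K + 1 := by
  simpa only [map_mul, map_add, map_one, Wx, Wy] using
    RingQuot.mkAlgHom_rel K (WeylRel.comm (K := K))

theorem adjoin_Wx_Wy : Algebra.adjoin K {Wx K, Wy K} = ⊤ := by
  have h := congrArg (Subalgebra.map (RingQuot.mkAlgHom K (WeylRel K)))
    (FreeAlgebra.adjoin_range_ι K (Fin 2))
  rw [AlgHom.map_adjoin, Algebra.map_top,
    (AlgHom.range_eq_top _).mpr (RingQuot.mkAlgHom_surjective K _), ← Set.range_comp] at h
  rw [← h]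
  congr 1
  ext a
  simp [Fin.exists_fin_two, Wx, Wy, eq_comm]

theorem algHom_ext {A : Type*} [Semiring A] [Algebra K A] {f g : Weyl K →ₐ[K] A}
    (hx : f (Wx K) = g (Wx K)) (hy : f (Wy K) = g (Wy K)) : f = g :=
  AlgHom.ext_of_adjoin_eq_top adjoin_Wx_Wy <| by
    rintro a (rfl | rfl)
    exacts [hx, hy]

def lift {A : Type*} [Ring A] [Algebra K A] (u v : A) (h : u * v = v * u + 1) :
    Weyl K →ₐ[K] A :=
  RingQuot.liftAlgHom K ⟨FreeAlgebra.lift K ![u, v], by rintro _ _ ⟨⟩; simp [h]⟩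

section lift

variable {A : Type*} [Ring A] [Algebra K A] (u v : A) (h : u * v = v * u + 1)

@[simp] theorem lift_Wx : lift u v h (Wx K) = u := by simp [lift, Wx]

@[simp] theorem lift_Wy : lift u v h (Wy K) = v := by simp [lift, Wy]

end lift

theorem eq_top_of_Wx_mem_of_Wy_mem {S : Subalgebra K (Weyl K)} (hx : Wx K ∈ S)
    (hy : Wy K ∈ S) : S = ⊤ :=
  top_le_iff.mp <| adjoin_Wx_Wy (K := K) ▸ Algebra.adjoin_le (Set.pair_subset hx hy)

variable (K) in
def polyRep : Weyl K →ₐ[K] Module.End K K[X] :=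
  lift (derivative : Module.End K K[X]) (Algebra.lmul K K[X] X) <| by
    refine LinearMap.ext fun f => ?_
    simp [derivative_mul]
    ring

@[simp] theorem polyRep_Wx : polyRep K (Wx K) = derivative := lift_Wx _ _ _

@[simp] theorem polyRep_Wy : polyRep K (Wy K) = Algebra.lmul K K[X] X := lift_Wy _ _ _

theorem polyRep_aeval_Wy (q : K[X]) : polyRep K (aeval (Wy K) q) = Algebra.lmul K K[X] q := by
  rw [← aeval_algHom_apply, polyRep_Wy, aeval_algHom_apply, aeval_X_left_apply]

instance : Nontrivial (Weyl K) := (polyRep K).toRingHom.domain_nontrivial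

theorem algebraMap_injective : Function.Injective (algebraMap K (Weyl K)) :=
  (algebraMap K (Weyl K)).injective

theorem surjective_of_map_Wy_eq_add {α : Weyl K →ₐ[K] Weyl K} {c : K}
    (hx : α (Wx K) = Wx K) (hy : α (Wy K) = algebraMap K (Weyl K) c + Wy K) :
    Function.Surjective α := by
  refine (AlgHom.range_eq_top α).mp (eq_top_of_Wx_mem_of_Wy_mem ⟨Wx K, hx⟩
    ⟨Wy K - algebraMap K (Weyl K) c, ?_⟩)
  change α _ = _
  rw [map_sub, hy, AlgHom.commutes, add_sub_cancel_left]

def scaleHom (c : Kˣ) : Weyl K →ₐ[K] Weyl K :=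
  lift (c • Wx K) (c⁻¹ • Wy K) <| by simp [smul_mul_smul_comm, Wx_mul_Wy]

def scale (c : Kˣ) : Weyl K ≃ₐ[K] Weyl K :=
  AlgEquiv.ofAlgHom (scaleHom c) (scaleHom c⁻¹)
    (algHom_ext (by simp [scaleHom, Units.smul_def]) (by simp [scaleHom, Units.smul_def]))
    (algHom_ext (by simp [scaleHom, Units.smul_def]) (by simp [scaleHom, Units.smul_def]))

@[simp] theorem scale_Wx (c : Kˣ) : scale c (Wx K) = c • Wx K := lift_Wx _ _ _

@[simp] theorem scale_Wy (c : Kˣ) : scale c (Wy K) = c⁻¹ • Wy K := lift_Wy _ _ _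

theorem exists_algEquiv_semiconj_of_map_Wy_eq_add {α β : Weyl K →ₐ[K] Weyl K} {a b : K}
    (ha : a ≠ 0) (hb : b ≠ 0) (hαx : α (Wx K) = Wx K)
    (hαy : α (Wy K) = algebraMap K (Weyl K) a + Wy K) (hβx : β (Wx K) = Wx K)
    (hβy : β (Wy K) = algebraMap K (Weyl K) b + Wy K) :
    ∃ F : Weyl K ≃ₐ[K] Weyl K, ∀ w, F (α w) = β (F w) := by
  set F := scale (Units.mk0 (b / a) (div_ne_zero hb ha))
  suffices h : F.toAlgHom.comp α = β.comp F.toAlgHom from ⟨F, AlgHom.congr_fun h⟩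
  refine algHom_ext ?_ ?_
  · simp [F, hαx, hβx]
  · simp [F, hαy, hβy, Units.smul_def]
    rw [Algebra.smul_def, ← map_mul, div_mul_cancel₀ a hb]

/-- `l i` stands for the paper's `l_{ip}`, so that `α_l y` is this polynomial evaluated at `y`. -/
def twistPoly (p N : ℕ) (l : ℕ → K) : K[X] :=
  X + ∑ i ∈ Finset.range (N + 1), C (l i) * X ^ (i * p)

variable {p N : ℕ} {l : ℕ → K}

theorem aeval_twistPoly {A : Type*} [Semiring A] [Algebra K A] (y : A) :
    aeval y (twistPoly p N l) = y + ∑ i ∈ Finset.range (N + 1), l i • y ^ (i * p) := by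
  simp [twistPoly, Algebra.smul_def]

theorem derivative_twistPoly [CharP K p] : derivative (twistPoly p N l) = 1 := by
  simp [twistPoly, derivative_X_pow]

theorem twistPoly_eq_X_add_C (h : ∀ i ∈ Finset.Icc 1 N, l i = 0) :
    twistPoly p N l = X + C (l 0) := by
  rw [twistPoly, Finset.sum_eq_single_of_mem 0 (by simp)]
  · simp
  · intro i hi hi0
    have hiN : i ≤ N := Nat.lt_succ_iff.mp (Finset.mem_range.mp hi)
    simp [h i (Finset.mem_Icc.mpr ⟨Nat.one_le_iff_ne_zero.mpr hi0, hiN⟩)]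

theorem coeff_twistPoly_mul (hp : 2 ≤ p) {j : ℕ} (hj : j ∈ Finset.Icc 1 N) :
    (twistPoly p N l).coeff (j * p) = l j := by
  obtain ⟨hj1, hjN⟩ := Finset.mem_Icc.mp hj
  have hp0 : 0 < p := by omega
  rw [twistPoly, coeff_add, coeff_X_of_ne_one (by nlinarith), finsetSum_coeff,
    Finset.sum_eq_single_of_mem j (Finset.mem_range.mpr (by omega))]
  · simp
  · intro i _ hij
    simp [coeff_X_pow, hij.symm, hp0.ne']

theorem eq_zero_of_natDegree_twistPoly_le_one (hp : 2 ≤ p)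
    (h : (twistPoly p N l).natDegree ≤ 1) : ∀ i ∈ Finset.Icc 1 N, l i = 0 := fun i hi => by
  rw [← coeff_twistPoly_mul (l := l) hp hi]
  exact coeff_eq_zero_of_natDegree_lt (by nlinarith [(Finset.mem_Icc.mp hi).1])

theorem natDegree_le_one_of_surjective {α : Weyl K →ₐ[K] Weyl K} (hα : Function.Surjective α)
    {q : K[X]} (hx : α (Wx K) = Wx K) (hy : α (Wy K) = aeval (Wy K) q)
    (hq : derivative q = 1) : q.natDegree ≤ 1 := by
  set V := (aeval q : K[X] →ₐ[K] K[X]).range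
  have hstab : ∀ a, polyRep K (α a) ∈ V.toSubmodule.stabilizerSubalgebra := by
    suffices h : (V.toSubmodule.stabilizerSubalgebra.comap ((polyRep K).comp α)) = ⊤ from
      fun a => Algebra.eq_top_iff.mp h a
    refine eq_top_of_Wx_mem_of_Wy_mem ?_ ?_
    · rintro _ ⟨P, rfl⟩
      refine ⟨derivative P, ?_⟩
      simp [hx, ← comp_eq_aeval, derivative_comp, hq]
    · rintro _ ⟨P, rfl⟩
      exact ⟨X * P, by simp [hy, polyRep_aeval_Wy]⟩
  obtain ⟨a, ha⟩ := hα (Wy K)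
  obtain ⟨P, hP⟩ : (X : K[X]) ∈ V := by
    simpa [ha] using hstab a (one_mem V)
  have hdeg : P.natDegree * q.natDegree = 1 := by
    rw [← natDegree_comp, comp_eq_aeval, ← natDegree_X (R := K)]
    exact congrArg natDegree hP
  exact Nat.le_of_dvd one_pos (Dvd.intro_left _ hdeg)

end Weyl

open Weyl in
/-- Suppose `k = (k₀, 0, 0, …)` with `k₀ ≠ 0`, i.e. `α_k y = k₀ + y` with `k₀ ≠ 0`, and let
`l = (l₀, l_p, …, l_{Np})`. Then `A₁ᵏ` is isomorphic to `A₁ˡ` (there is a bijective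
`K`-linear map `f` with `f (a *_k b) = f a *_l f b` and `f ∘ α_k = α_l ∘ f`) if and only if
`l = (l₀, 0, 0, …)` with `l₀ ≠ 0`, i.e. `α_l y = l₀ + y` with `l₀ ≠ 0`. -/
theorem homWeyl_iso_iff_of_kZero (K : Type*) [Field K] (p : ℕ) (hp : p.Prime)
    [CharP K p] (k0 : K) (hk0 : k0 ≠ 0) (N : ℕ) (l : ℕ → K)
    (αk αl : Weyl K →ₐ[K] Weyl K)
    (hkx : αk (Wx K) = Wx K)
    (hky : αk (Wy K) = algebraMap K (Weyl K) k0 + Wy K)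
    (hlx : αl (Wx K) = Wx K)
    (hly : αl (Wy K) = Wy K + ∑ i ∈ Finset.range (N + 1), l i • (Wy K) ^ (i * p)) :
    (∃ f : Weyl K →ₗ[K] Weyl K, Function.Bijective f ∧
      (∀ a b : Weyl K, f (αk (a * b)) = αl (f a * f b)) ∧
      (∀ a : Weyl K, f (αk a) = αl (f a))) ↔
    (l 0 ≠ 0 ∧ ∀ i ∈ Finset.Icc 1 N, l i = 0) := by
  have hly' : αl (Wy K) = aeval (Wy K) (twistPoly p N l) := by rw [hly, aeval_twistPoly]
  have hshift (h : ∀ i ∈ Finset.Icc 1 N, l i = 0) :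
      αl (Wy K) = algebraMap K (Weyl K) (l 0) + Wy K := by
    rw [hly', twistPoly_eq_X_add_C h, map_add, aeval_X, aeval_C, add_comm]
  constructor
  · rintro ⟨f, hf, -, hcomm⟩
    have hαl : Function.Surjective αl := fun w => by
      obtain ⟨v, rfl⟩ := (hf.2.comp (surjective_of_map_Wy_eq_add hkx hky)) w
      exact ⟨f v, (hcomm v).symm⟩
    have hzero := eq_zero_of_natDegree_twistPoly_le_one hp.two_le
      (natDegree_le_one_of_surjective hαl hlx hly' derivative_twistPoly)
    refine ⟨fun hl0 => hk0 (algebraMap_injective ?_), hzero⟩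
    have hαl_id : αl = AlgHom.id K (Weyl K) := algHom_ext hlx (by simp [hshift hzero, hl0])
    have hαk_y : αk (Wy K) = Wy K := hf.1 (by rw [hcomm, hαl_id]; rfl)
    rwa [hky, add_eq_right, ← map_zero (algebraMap K (Weyl K))] at hαk_y
  · rintro ⟨hl0, hzero⟩
    obtain ⟨F, hF⟩ :=
      exists_algEquiv_semiconj_of_map_Wy_eq_add hk0 hl0 hkx hky hlx (hshift hzero)
    exact ⟨F.toLinearMap, F.bijective, fun a b => (hF (a * b)).trans (by simp), hF⟩
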